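/- arXiv:1611.09090 — 4 statements merged into one kernel-verified Lean document; each statement's English description precedes it below -/
import Mathlib

section
/- Let d ≥ 2, m ≥ 1, S > 0 and let R : Σ_m^{(d)} → ℤ^d satisfy ∑_{i=1}^d R_i(v) = S for all v, together with the tenability condition R_i(v) ≥ 0 for all v ≠ m·e_i and all i. If h(x) = ∑_{v ∈ Σ_m^{(d)}} (m choose v_1,...,v_d)(∏_i x_i^{v_i})(R(v) − S·x) vanishes identically on the simplex Σ^{(d)}, then m divides S and R(v) = (S/m)·v for all v ∈ Σ_m^{(d)}. -/
open Finset

/-- The set `Σ_m^{(d)}` of vectors `v ∈ ℕ^d` with `∑ i, v i = m`. -/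
def sigmaVec (d m : ℕ) : Finset (Fin d → ℕ) :=
  (Fintype.piFinset fun _ : Fin d => Finset.range (m + 1)).filter (fun v => ∑ i, v i = m)

/-- The drift function `h` of a balanced multi-drawing Pólya urn. -/
noncomputable def urnDrift (d m : ℕ) (S : ℕ) (R : (Fin d → ℕ) → Fin d → ℤ)
    (x : Fin d → ℝ) : Fin d → ℝ :=
  fun j => ∑ v ∈ sigmaVec d m,
    (Nat.multinomial Finset.univ v : ℝ) * (∏ i, x i ^ v i) * ((R v j : ℝ) - (S : ℝ) * x j)

/-!
Rescaling a positive vector `y` onto the simplex turns `h = 0` into the identity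
`∑_v (m choose v) R_j(v) y^v = S y_j (∑ y)^(m-1)` of polynomials on the positive orthant.
Applying `y_j ∂/∂y_j` to the multinomial expansion of `(∑ y)^m` rewrites the right-hand side
as `∑_v (m choose v) (S v_j / m) y^v`, so comparing coefficients gives `m R_j(v) = S v_j`;
a `v` with `v_j = 1` then shows `m ∣ S`.
-/

lemma mem_sigmaVec {d m : ℕ} {v : Fin d → ℕ} : v ∈ sigmaVec d m ↔ ∑ i, v i = m := by
  simp only [sigmaVec, mem_filter, Fintype.mem_piFinset, mem_range, Nat.lt_succ_iff,
    and_iff_right_iff_imp]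
  rintro rfl i
  exact single_le_sum (fun _ _ => Nat.zero_le _) (mem_univ i)

lemma sigmaVec_eq_piAntidiag (d m : ℕ) : sigmaVec d m = piAntidiag univ m := by
  ext v; simp [mem_sigmaVec, mem_piAntidiag]

lemma sum_pow_eq_sum_sigmaVec {R : Type*} [CommSemiring R] {d : ℕ} (m : ℕ) (y : Fin d → R) :
    (∑ i, y i) ^ m = ∑ v ∈ sigmaVec d m, (Nat.multinomial univ v : R) * ∏ i, y i ^ v i := by
  rw [sigmaVec_eq_piAntidiag, sum_pow_eq_sum_piAntidiag]

open Polynomial in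
lemma sum_sigmaVec_multinomial_mul_apply {R : Type*} [CommSemiring R] {d : ℕ} (m : ℕ)
    (y : Fin d → R) (j : Fin d) :
    ∑ v ∈ sigmaVec d m, (Nat.multinomial univ v : R) * v j * ∏ i, y i ^ v i
      = m * y j * (∑ i, y i) ^ (m - 1) := by
  -- Differentiate the expansion of `(∑ z)^m` at `X = 1`, where `z` is `y` with `y_j X` for `y_j`.
  set z : Fin d → R[X] := fun i => C (y i) * if i = j then X else 1
  have hz : ∀ v : Fin d → ℕ, ∏ i, z i ^ v i = C (∏ i, y i ^ v i) * X ^ v j := by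
    intro v
    simp only [z, mul_pow, prod_mul_distrib, map_prod, map_pow, ite_pow, one_pow,
      Fintype.prod_ite_eq']
  have hz_eval : ∀ i, (z i).eval 1 = y i := fun i => by by_cases h : i = j <;> simp [z, h]
  have hz_deriv : ∑ i, (derivative (z i)).eval 1 = y j := by
    simp [z, apply_ite]
  have key := congrArg (fun p => (derivative p).eval 1) (sum_pow_eq_sum_sigmaVec m z)
  simp only [hz, derivative_sum, derivative_pow, eval_finsetSum, derivative_mul,
    derivative_natCast, derivative_C, derivative_X, eval_mul, eval_natCast, eval_C, eval_pow,
    eval_X, one_pow, zero_mul, zero_add, mul_one, hz_eval, hz_deriv] at key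
  rw [mul_right_comm, key]
  exact sum_congr rfl fun v _ => by ring

lemma eq_zero_of_sum_mul_prod_pow_eq_zero {R σ : Type*} [CommRing R] [IsDomain R]
    [Fintype σ] (T : σ → Set R) (hT : ∀ i, (T i).Infinite) (s : Finset (σ → ℕ)) (a : (σ → ℕ) → R)
    (h : ∀ y ∈ Set.univ.pi T, ∑ v ∈ s, a v * ∏ i, y i ^ v i = 0) : ∀ v ∈ s, a v = 0 := by
  classical
  set P : MvPolynomial σ R :=
    ∑ v ∈ s, MvPolynomial.monomial (Finsupp.equivFunOnFinite.symm v) (a v)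
  have hP : P = 0 := MvPolynomial.funext_set T hT fun y hy => by
    simpa [P, MvPolynomial.eval_monomial, Finsupp.prod_fintype] using h y hy
  intro v hv
  have := congrArg (MvPolynomial.coeff (Finsupp.equivFunOnFinite.symm v)) hP
  simpa [P, MvPolynomial.coeff_sum, MvPolynomial.coeff_monomial, hv] using this

lemma exists_mem_sigmaVec_apply_eq_one {d m : ℕ} (hd : 1 < d) (hm : 1 ≤ m) (i : Fin d) :
    ∃ v ∈ sigmaVec d m, v i = 1 := by
  obtain ⟨k, hki⟩ := Fintype.exists_ne_of_one_lt_card (by simpa using hd) i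
  refine ⟨Pi.single i 1 + Pi.single k (m - 1), mem_sigmaVec.2 ?_, by simp [hki.symm]⟩
  simp only [Pi.add_apply, sum_add_distrib, Fintype.sum_pi_single']
  omega

lemma urnDrift_apply (d m S : ℕ) (R : (Fin d → ℕ) → Fin d → ℤ) (x : Fin d → ℝ) (j : Fin d) :
    urnDrift d m S R x j =
      ∑ v ∈ sigmaVec d m, (Nat.multinomial univ v : ℝ) * (∏ i, x i ^ v i) * R v j
        - S * x j * (∑ i, x i) ^ m := by
  rw [urnDrift, sum_pow_eq_sum_sigmaVec, mul_sum, ← sum_sub_distrib]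
  exact sum_congr rfl fun v _ => by ring

lemma prod_smul_pow_of_mem_sigmaVec {d m : ℕ} {v : Fin d → ℕ} (hv : v ∈ sigmaVec d m) (c : ℝ)
    (y : Fin d → ℝ) : ∏ i, (c • y) i ^ v i = c ^ m * ∏ i, y i ^ v i := by
  simp only [Pi.smul_apply, smul_eq_mul, mul_pow, prod_mul_distrib, prod_pow_eq_pow_sum,
    mem_sigmaVec.1 hv]

lemma sum_sigmaVec_mul_eq_of_urnDrift_eq_zero {d m S : ℕ} (hm : 1 ≤ m)
    {R : (Fin d → ℕ) → Fin d → ℤ}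
    (hzero : ∀ x : Fin d → ℝ, (∀ i, 0 ≤ x i) → (∀ i, x i ≤ 1) → (∑ i, x i = 1) →
      ∀ j, urnDrift d m S R x j = 0)
    (j : Fin d) (y : Fin d → ℝ) (hy : ∀ i, 0 < y i) :
    ∑ v ∈ sigmaVec d m, (Nat.multinomial univ v : ℝ) * (∏ i, y i ^ v i) * R v j
      = S * y j * (∑ i, y i) ^ (m - 1) := by
  set t := ∑ i, y i
  have ht : 0 < t := sum_pos (fun i _ => hy i) ⟨j, mem_univ j⟩
  set x := t⁻¹ • y
  have hx_nonneg : ∀ i, 0 ≤ x i := fun i => mul_nonneg (inv_nonneg.2 ht.le) (hy i).le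
  have hx_sum : ∑ i, x i = 1 := by
    simp only [x, Pi.smul_apply, smul_eq_mul, ← mul_sum]
    exact inv_mul_cancel₀ ht.ne'
  have hx_le : ∀ i, x i ≤ 1 := fun i =>
    hx_sum ▸ single_le_sum (fun k _ => hx_nonneg k) (mem_univ i)
  have hdrift := hzero x hx_nonneg hx_le hx_sum j
  rw [urnDrift_apply, hx_sum, one_pow, mul_one, sub_eq_zero] at hdrift
  have hscale : ∑ v ∈ sigmaVec d m, (Nat.multinomial univ v : ℝ) * (∏ i, y i ^ v i) * R v j
      = t ^ m *
        ∑ v ∈ sigmaVec d m, (Nat.multinomial univ v : ℝ) * (∏ i, x i ^ v i) * R v j := by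
    rw [mul_sum]
    refine sum_congr rfl fun v hv => ?_
    rw [prod_smul_pow_of_mem_sigmaVec hv, inv_pow]
    field_simp
  rw [hscale, hdrift, ← Nat.sub_add_cancel hm, pow_succ]
  simp only [x, Pi.smul_apply, smul_eq_mul, Nat.add_sub_cancel]
  field_simp

lemma mul_eq_mul_apply_of_urnDrift_eq_zero {d m S : ℕ} (hm : 1 ≤ m)
    {R : (Fin d → ℕ) → Fin d → ℤ}
    (hzero : ∀ x : Fin d → ℝ, (∀ i, 0 ≤ x i) → (∀ i, x i ≤ 1) → (∑ i, x i = 1) →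
      ∀ j, urnDrift d m S R x j = 0)
    (j : Fin d) {v : Fin d → ℕ} (hv : v ∈ sigmaVec d m) : (m : ℤ) * R v j = S * v j := by
  have hcoeff := eq_zero_of_sum_mul_prod_pow_eq_zero (fun _ => Set.Ioi (0 : ℝ))
    (fun _ => Set.Ioi_infinite 0) (sigmaVec d m)
    (fun v => (Nat.multinomial univ v : ℝ) * (m * R v j - S * v j)) (fun y hy => ?_) v hv
  · have hC : (Nat.multinomial univ v : ℝ) ≠ 0 :=
      Nat.cast_ne_zero.2 (Nat.multinomial_pos _ _).ne'
    exact_mod_cast sub_eq_zero.1 ((mul_eq_zero.1 hcoeff).resolve_left hC)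
  · have hR := sum_sigmaVec_mul_eq_of_urnDrift_eq_zero hm hzero j y
      fun i => hy i (Set.mem_univ i)
    have hE := sum_sigmaVec_multinomial_mul_apply m y j
    calc ∑ v ∈ sigmaVec d m,
          (Nat.multinomial univ v : ℝ) * (m * R v j - S * v j) * ∏ i, y i ^ v i
        = m * ∑ v ∈ sigmaVec d m, (Nat.multinomial univ v : ℝ) * (∏ i, y i ^ v i) * R v j
          - S * ∑ v ∈ sigmaVec d m, (Nat.multinomial univ v : ℝ) * v j * ∏ i, y i ^ v i := by
          rw [mul_sum, mul_sum, ← sum_sub_distrib]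
          exact sum_congr rfl fun v _ => by ring
      _ = 0 := by rw [hR, hE]; ring

theorem h_zero_implies_diagonal_general (d m S : ℕ) (hd : 2 ≤ d) (hm : 1 ≤ m)
    (R : (Fin d → ℕ) → Fin d → ℤ)
    (hzero : ∀ x : Fin d → ℝ, (∀ i, 0 ≤ x i) → (∀ i, x i ≤ 1) → (∑ i, x i = 1) →
      ∀ j, urnDrift d m S R x j = 0) :
    m ∣ S ∧ ∀ v ∈ sigmaVec d m, ∀ i, R v i = ((S / m : ℕ) : ℤ) * (v i : ℤ) := by
  let i₀ : Fin d := ⟨0, by omega⟩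
  obtain ⟨v, hv, hv_one⟩ := exists_mem_sigmaVec_apply_eq_one hd hm i₀
  have hdvd : m ∣ S := by
    have h := mul_eq_mul_apply_of_urnDrift_eq_zero hm hzero i₀ hv
    rw [hv_one, Nat.cast_one, mul_one] at h
    exact Int.natCast_dvd_natCast.1 ⟨_, h.symm⟩
  have hm₀ : (m : ℤ) ≠ 0 := by exact_mod_cast (by omega : m ≠ 0)
  refine ⟨hdvd, fun v hv i => mul_left_cancel₀ hm₀ ?_⟩
  rw [mul_eq_mul_apply_of_urnDrift_eq_zero hm hzero i hv, ← mul_assoc]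
  norm_cast
  rw [Nat.mul_div_cancel' hdvd]

theorem h_zero_implies_diagonal (d m S : ℕ) (hd : 2 ≤ d) (hm : 1 ≤ m) (hS : 0 < S)
    (R : (Fin d → ℕ) → Fin d → ℤ)
    (hbal : ∀ v ∈ sigmaVec d m, ∑ i, R v i = (S : ℤ))
    (hten : ∀ v ∈ sigmaVec d m, ∀ i : Fin d,
      v ≠ (fun j => if j = i then m else 0) → 0 ≤ R v i)
    (hzero : ∀ x : Fin d → ℝ, (∀ i, 0 ≤ x i) → (∀ i, x i ≤ 1) → (∑ i, x i = 1) →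
      ∀ j, urnDrift d m S R x j = 0) :
    m ∣ S ∧ ∀ v ∈ sigmaVec d m, ∀ i, R v i = ((S / m : ℕ) : ℤ) * (v i : ℤ) :=
  h_zero_implies_diagonal_general d m S hd hm R hzero
end

section
/- For the function h(x) = (x_1² + 2x_2x_3 − x_1, x_2² + 2x_1x_3 − x_2, x_3² + 2x_1x_2 − x_3) on the simplex Σ^{(3)}, with θ = (1/3,1/3,1/3), the inner product ⟨h(x), x − θ⟩ is strictly negative for every x ∈ Σ^{(3)} that is not one of the four zeros (1,0,0), (0,1,0), (0,0,1), θ of h. -/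
theorem example_4_2_1_lyapunov (x₁ x₂ x₃ : ℝ)
    (h0 : 0 ≤ x₁ ∧ 0 ≤ x₂ ∧ 0 ≤ x₃) (h1 : x₁ ≤ 1 ∧ x₂ ≤ 1 ∧ x₃ ≤ 1)
    (hsum : x₁ + x₂ + x₃ = 1)
    (hne : (x₁, x₂, x₃) ≠ (1, 0, 0) ∧ (x₁, x₂, x₃) ≠ (0, 1, 0) ∧
           (x₁, x₂, x₃) ≠ (0, 0, 1) ∧ (x₁, x₂, x₃) ≠ (1 / 3, 1 / 3, 1 / 3)) :
    (x₁ ^ 2 + 2 * x₂ * x₃ - x₁) * (x₁ - 1 / 3) +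
    (x₂ ^ 2 + 2 * x₁ * x₃ - x₂) * (x₂ - 1 / 3) +
    (x₃ ^ 2 + 2 * x₁ * x₂ - x₃) * (x₃ - 1 / 3) < 0 := by
  obtain ⟨h01, h02, h03⟩ := h0
  obtain ⟨n1, n2, n3, n4⟩ := hne
  have t1 : 0 ≤ x₁ * (x₂ - x₃) ^ 2 := mul_nonneg h01 (sq_nonneg _)
  have t2 : 0 ≤ x₂ * (x₃ - x₁) ^ 2 := mul_nonneg h02 (sq_nonneg _)
  have t3 : 0 ≤ x₃ * (x₁ - x₂) ^ 2 := mul_nonneg h03 (sq_nonneg _)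
  have hS : 0 < x₁ * (x₂ - x₃) ^ 2 + x₂ * (x₃ - x₁) ^ 2 + x₃ * (x₁ - x₂) ^ 2 := by
    rcases lt_or_eq_of_le (by linarith : (0:ℝ) ≤ x₁ * (x₂ - x₃) ^ 2 + x₂ * (x₃ - x₁) ^ 2 + x₃ * (x₁ - x₂) ^ 2) with h | h
    · exact h
    · exfalso
      have e1 : x₁ * (x₂ - x₃) ^ 2 = 0 := by linarith
      have e2 : x₂ * (x₃ - x₁) ^ 2 = 0 := by linarith
      have e3 : x₃ * (x₁ - x₂) ^ 2 = 0 := by linarith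
      have c1 : x₁ = 0 ∨ x₂ = x₃ := by
        rcases mul_eq_zero.mp e1 with h' | h'
        · exact Or.inl h'
        · exact Or.inr (by nlinarith [pow_eq_zero_iff (n := 2) (by norm_num) |>.mp h'])
      have c2 : x₂ = 0 ∨ x₃ = x₁ := by
        rcases mul_eq_zero.mp e2 with h' | h'
        · exact Or.inl h'
        · exact Or.inr (by nlinarith [pow_eq_zero_iff (n := 2) (by norm_num) |>.mp h'])
      have c3 : x₃ = 0 ∨ x₁ = x₂ := by
        rcases mul_eq_zero.mp e3 with h' | h'
        · exact Or.inl h'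
        · exact Or.inr (by nlinarith [pow_eq_zero_iff (n := 2) (by norm_num) |>.mp h'])
      rcases c1 with hA | hA <;> rcases c2 with hB | hB <;> rcases c3 with hC | hC <;>
        first
          | exact n1 (by simp only [Prod.mk.injEq]; refine ⟨by linarith, by linarith, by linarith⟩)
          | exact n2 (by simp only [Prod.mk.injEq]; refine ⟨by linarith, by linarith, by linarith⟩)
          | exact n3 (by simp only [Prod.mk.injEq]; refine ⟨by linarith, by linarith, by linarith⟩)
          | exact n4 (by simp only [Prod.mk.injEq]; refine ⟨by linarith, by linarith, by linarith⟩)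
  have heq : (x₁ ^ 2 + 2 * x₂ * x₃ - x₁) * (x₁ - 1 / 3) +
      (x₂ ^ 2 + 2 * x₁ * x₃ - x₂) * (x₂ - 1 / 3) +
      (x₃ ^ 2 + 2 * x₁ * x₂ - x₃) * (x₃ - 1 / 3) =
      -(x₁ * (x₂ - x₃) ^ 2 + x₂ * (x₃ - x₁) ^ 2 + x₃ * (x₁ - x₂) ^ 2) := by
    linear_combination ((x₁ + x₂ + x₃) ^ 2 - (x₁ + x₂ + x₃) / 3 - 1 / 3 -
      2 * (x₁ * x₂ + x₂ * x₃ + x₁ * x₃)) * hsum + hsum / 3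
  rw [heq]
  linarith
end

section
/- Consider Example 4.2.2: the function h(x) = (2x_1² + x_2² + x_3² − 2x_1, x_3(4x_1 + 2x_2 + x_3) − 2x_2, x_2(4x_1 + x_2 + 2x_3) − 2x_3) has exactly two zeros on the simplex Σ^{(3)}: (1,0,0) and (1/5, 2/5, 2/5). -/
theorem example_4_2_2_zeros (x₁ x₂ x₃ : ℝ)
    (h0 : 0 ≤ x₁ ∧ 0 ≤ x₂ ∧ 0 ≤ x₃) (h1 : x₁ ≤ 1 ∧ x₂ ≤ 1 ∧ x₃ ≤ 1)
    (hsum : x₁ + x₂ + x₃ = 1) :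
    (2 * x₁ ^ 2 + x₂ ^ 2 + x₃ ^ 2 - 2 * x₁ = 0 ∧
     x₃ * (4 * x₁ + 2 * x₂ + x₃) - 2 * x₂ = 0 ∧
     x₂ * (4 * x₁ + x₂ + 2 * x₃) - 2 * x₃ = 0) ↔
    ((x₁, x₂, x₃) = (1, 0, 0) ∨ (x₁, x₂, x₃) = (1 / 5, 2 / 5, 2 / 5)) := by
  obtain ⟨hx1, hx2, hx3⟩ := h0
  constructor
  · rintro ⟨e1, e2, e3⟩
    have h23 : (x₃ - x₂) * (3 * x₁ + 3) = 0 := by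
      linear_combination e2 - e3 - (x₃ - x₂) * hsum
    have hne : (3 * x₁ + 3) ≠ 0 := by positivity
    have heq : x₂ = x₃ := by
      have := mul_eq_zero.mp h23
      rcases this with h | h
      · linarith
      · exact absurd h hne
    have hx1eq : x₁ = 1 - 2 * x₂ := by linarith
    have hfac : 2 * x₂ * (5 * x₂ - 2) = 0 := by
      rw [hx1eq, ← heq] at e1; nlinarith [e1]
    rcases mul_eq_zero.mp hfac with h | h
    · have : x₂ = 0 := by linarith
      left
      simp only [Prod.mk.injEq]
      refine ⟨by linarith, this, by linarith⟩
    · have : x₂ = 2 / 5 := by linarith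
      right
      simp only [Prod.mk.injEq]
      refine ⟨by linarith, this, by linarith⟩
  · rintro (h | h) <;>
    · simp only [Prod.mk.injEq] at h
      obtain ⟨a, b, c⟩ := h
      subst a; subst b; subst c
      norm_num
end

section
/- For the without-replacement sampling probabilities, the error term converges: if U ∈ ℕ^d with T := ∑_i U_i ≥ m and Z_i := U_i/T, then for every v ∈ Σ_m^{(d)}, |∏_{i=1}^d C(U_i, v_i)/C(T, m) − (m choose v_1,...,v_d) ∏_{i=1}^d Z_i^{v_i}| ≤ M/T for a constant M depending only on m and d (and not on U). -/
/-!
With `T = ∑ i, U i`, the hypergeometric probability equals `multinomial v * a / b`, where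
`a = ∏ i, (U i).descFactorial (v i) / T ^ v i` and `b = T.descFactorial m / T ^ m`, while the
multinomial probability is `multinomial v * c` with `c = ∏ i, (U i / T) ^ v i`. Both `c - a` and
`1 - b` are differences of two products of `m` factors in `[0, 1]` that differ factorwise by at
most `m / T`, so both are at most `m ^ 2 / T`. As the hypergeometric probability is at most `1`
(Vandermonde) and `multinomial v ≤ m !`, the two probabilities differ by at most `m ! * m ^ 2 / T`.
-/

open Finset

open scoped Nat

theorem Finset.prod_sub_prod_le_sum_sub {ι R : Type*} [CommRing R] [PartialOrder R]
    [IsOrderedRing R] (s : Finset ι) {f g : ι → R} (hg : ∀ i ∈ s, 0 ≤ g i)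
    (hgf : ∀ i ∈ s, g i ≤ f i) (hf : ∀ i ∈ s, f i ≤ 1) :
    ∏ i ∈ s, f i - ∏ i ∈ s, g i ≤ ∑ i ∈ s, (f i - g i) := by
  induction s using Finset.cons_induction with
  | empty => simp
  | cons a s _ ih =>
    simp only [forall_mem_cons] at hg hgf hf
    rw [prod_cons, prod_cons, sum_cons]
    have hPgf : ∏ i ∈ s, g i ≤ ∏ i ∈ s, f i := prod_le_prod hg.2 hgf.2
    have hPf : ∏ i ∈ s, f i ≤ 1 :=
      prod_le_one (fun i hi => (hg.2 i hi).trans (hgf.2 i hi)) hf.2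
    calc f a * ∏ i ∈ s, f i - g a * ∏ i ∈ s, g i
        = (f a - g a) * ∏ i ∈ s, f i + g a * (∏ i ∈ s, f i - ∏ i ∈ s, g i) := by ring
      _ ≤ (f a - g a) * 1 + 1 * ∑ i ∈ s, (f i - g i) :=
        add_le_add (mul_le_mul_of_nonneg_left hPf (sub_nonneg.2 hgf.1))
          (mul_le_mul (hgf.1.trans hf.1) (ih hg.2 hgf.2 hf.2) (sub_nonneg.2 hPgf) zero_le_one)
      _ = f a - g a + ∑ i ∈ s, (f i - g i) := by ring

theorem Nat.choose_mul_choose_le_choose_add (a b k l : ℕ) :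
    a.choose k * b.choose l ≤ (a + b).choose (k + l) := by
  rw [Nat.add_choose_eq]
  exact single_le_sum (f := fun ij : ℕ × ℕ => a.choose ij.1 * b.choose ij.2)
    (a := (k, l)) (fun _ _ => Nat.zero_le _) (mem_antidiagonal.2 rfl)

theorem Nat.prod_choose_le_choose_sum {ι : Type*} (s : Finset ι) (U v : ι → ℕ) :
    ∏ i ∈ s, (U i).choose (v i) ≤ (∑ i ∈ s, U i).choose (∑ i ∈ s, v i) := by
  induction s using Finset.cons_induction with
  | empty => simp
  | cons a s _ ih =>
    rw [prod_cons, sum_cons, sum_cons]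
    exact (Nat.mul_le_mul_left _ ih).trans (choose_mul_choose_le_choose_add _ _ _ _)

theorem Nat.multinomial_le_factorial_sum {ι : Type*} (s : Finset ι) (v : ι → ℕ) :
    multinomial s v ≤ (∑ i ∈ s, v i)! :=
  Nat.div_le_self _ _

theorem prod_choose_div_choose_eq {ι : Type*} (s : Finset ι) (U v : ι → ℕ) :
    (∏ i ∈ s, ((U i).choose (v i) : ℝ)) / ((∑ i ∈ s, U i).choose (∑ i ∈ s, v i) : ℝ) =
      Nat.multinomial s v * (∏ i ∈ s, ((U i).descFactorial (v i) : ℝ)) /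
        ((∑ i ∈ s, U i).descFactorial (∑ i ∈ s, v i) : ℝ) := by
  have hμ : (Nat.multinomial s v : ℝ) * ∏ i ∈ s, ((v i)! : ℝ) = ((∑ i ∈ s, v i)! : ℝ) := by
    rw [mul_comm]
    exact_mod_cast Nat.multinomial_spec s v
  simp only [Nat.descFactorial_eq_factorial_mul_choose, Nat.cast_mul,
    prod_mul_distrib, ← hμ]
  rw [← mul_assoc, mul_div_mul_left _ _ (by rw [hμ]; positivity)]

theorem descFactorial_div_pow_le (n k : ℕ) {t : ℝ} (ht : 0 ≤ t) :
    (n.descFactorial k : ℝ) / t ^ k ≤ ((n : ℝ) / t) ^ k := by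
  rw [div_pow]
  gcongr
  exact_mod_cast n.descFactorial_le_pow k

theorem pow_div_sub_descFactorial_div_pow_le (n k : ℕ) {t : ℝ} (ht : 0 < t)
    (hn : (n : ℝ) ≤ t) :
    ((n : ℝ) / t) ^ k - n.descFactorial k / t ^ k ≤ k ^ 2 / t := by
  have hfactor : ∀ j ∈ range k, ((n - j : ℕ) : ℝ) / t ≤ n / t := fun j _ => by
    gcongr
    exact_mod_cast n.sub_le j
  calc ((n : ℝ) / t) ^ k - n.descFactorial k / t ^ k
      = ∏ _j ∈ range k, ((n : ℝ) / t) - ∏ j ∈ range k, (((n - j : ℕ) : ℝ) / t) := by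
        rw [prod_const, card_range, prod_div_distrib, prod_const, card_range,
          Nat.descFactorial_eq_prod_range, Nat.cast_prod]
    _ ≤ ∑ j ∈ range k, ((n : ℝ) / t - ((n - j : ℕ) : ℝ) / t) :=
        prod_sub_prod_le_sum_sub _ (fun _ _ => by positivity) hfactor
          (fun _ _ => div_le_one_of_le₀ hn ht.le)
    _ ≤ ∑ _j ∈ range k, (k : ℝ) / t := sum_le_sum fun j hj => by
        have hj : j ≤ k := (mem_range.1 hj).le
        have hnj : (n : ℝ) ≤ ((n - j : ℕ) : ℝ) + j := by exact_mod_cast le_tsub_add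
        rw [← sub_div]
        gcongr
        linarith [(Nat.cast_le (α := ℝ)).2 hj]
    _ = k ^ 2 / t := by rw [sum_const, card_range, nsmul_eq_mul]; ring

theorem prod_div_pow_sub_prod_descFactorial_div_pow_le {ι : Type*} (s : Finset ι)
    (U v : ι → ℕ) {t : ℝ} (ht : 0 < t) (hU : ∀ i ∈ s, (U i : ℝ) ≤ t) :
    ∏ i ∈ s, ((U i : ℝ) / t) ^ v i - ∏ i ∈ s, ((U i).descFactorial (v i) : ℝ) / t ^ v i ≤
      ((∑ i ∈ s, v i : ℕ) : ℝ) ^ 2 / t := by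
  calc ∏ i ∈ s, ((U i : ℝ) / t) ^ v i - ∏ i ∈ s, ((U i).descFactorial (v i) : ℝ) / t ^ v i
      ≤ ∑ i ∈ s, (((U i : ℝ) / t) ^ v i - (U i).descFactorial (v i) / t ^ v i) :=
        prod_sub_prod_le_sum_sub _ (fun _ _ => by positivity)
          (fun _ _ => descFactorial_div_pow_le _ _ ht.le)
          (fun i hi => pow_le_one₀ (by positivity) (div_le_one_of_le₀ (hU i hi) ht.le))
    _ ≤ ∑ i ∈ s, ((v i : ℝ) ^ 2 / t) :=
        sum_le_sum fun i hi => pow_div_sub_descFactorial_div_pow_le _ _ ht (hU i hi)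
    _ ≤ ((∑ i ∈ s, v i : ℕ) : ℝ) ^ 2 / t := by
        rw [← sum_div, Nat.cast_sum]
        gcongr
        exact sum_sq_le_sq_sum_of_nonneg fun _ _ => by positivity

theorem abs_mul_div_sub_mul_le {μ a b c ε K : ℝ} (hμ : 0 ≤ μ) (hμK : μ ≤ K) (hK : 1 ≤ K)
    (ha : 0 ≤ a) (hac : a ≤ c) (hca : c - a ≤ ε) (hb : 0 < b) (hb1 : b ≤ 1) (hb1ε : 1 - b ≤ ε)
    (hratio : μ * a / b ≤ 1) :
    |μ * a / b - μ * c| ≤ K * ε := by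
  have hε : 0 ≤ ε := by linarith
  rw [show μ * a / b - μ * c = μ * a / b * (1 - b) - μ * (c - a) by field_simp; ring]
  apply abs_sub_le_of_nonneg_of_le
  · exact mul_nonneg (by positivity) (by linarith)
  · calc μ * a / b * (1 - b) ≤ 1 * ε := mul_le_mul hratio hb1ε (by linarith) zero_le_one
      _ ≤ K * ε := by gcongr
  · exact mul_nonneg hμ (by linarith)
  · exact mul_le_mul hμK hca (by linarith) (by linarith)

theorem hypergeometric_multinomial_bound_general (m d : ℕ) (hm : 1 ≤ m) :
    ∃ M : ℝ, ∀ U : Fin d → ℕ, m ≤ ∑ i, U i →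
      ∀ v ∈ sigmaVec d m,
        |(∏ i, (Nat.choose (U i) (v i) : ℝ)) / (Nat.choose (∑ i, U i) m : ℝ)
          - (Nat.multinomial Finset.univ v : ℝ) *
            ∏ i, ((U i : ℝ) / (∑ i, U i : ℕ)) ^ v i|
        ≤ M / (∑ i, U i : ℕ) := by
  refine ⟨m ! * m ^ 2, fun U hmT v hv => ?_⟩
  replace hv : ∑ i, v i = m := (mem_filter.1 hv).2
  set T := ∑ i, U i
  have hT : (0 : ℝ) < T := by exact_mod_cast hm.trans hmT
  have hU : ∀ i ∈ univ, (U i : ℝ) ≤ T := fun i hi => by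
    exact_mod_cast single_le_sum (fun j _ => Nat.zero_le (U j)) hi
  have hyper : (∏ i, ((U i).choose (v i) : ℝ)) / (T.choose m : ℝ) =
      Nat.multinomial univ v * (∏ i, ((U i).descFactorial (v i) : ℝ) / (T : ℝ) ^ v i) /
        ((T.descFactorial m : ℝ) / (T : ℝ) ^ m) := by
    rw [← hv, prod_choose_div_choose_eq, prod_div_distrib, prod_pow_eq_pow_sum]
    field_simp
    rfl
  have hyper_le_one : (∏ i, ((U i).choose (v i) : ℝ)) / (T.choose m : ℝ) ≤ 1 := by
    rw [← hv]
    exact div_le_one_of_le₀ (by exact_mod_cast Nat.prod_choose_le_choose_sum univ U v)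
      (by positivity)
  have hprod := prod_div_pow_sub_prod_descFactorial_div_pow_le univ U v hT hU
  have hfalling := pow_div_sub_descFactorial_div_pow_le T m hT le_rfl
  have hfalling_le := descFactorial_div_pow_le T m hT.le
  rw [div_self hT.ne', one_pow] at hfalling hfalling_le
  rw [hv] at hprod
  rw [hyper] at hyper_le_one ⊢
  rw [mul_div_assoc (m ! : ℝ)]
  refine abs_mul_div_sub_mul_le (by positivity) ?_ ?_ (by positivity)
    (prod_le_prod (fun _ _ => by positivity) fun _ _ => descFactorial_div_pow_le _ _ hT.le)
    hprod (by have := Nat.descFactorial_pos.2 hmT; positivity)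
    hfalling_le hfalling hyper_le_one
  · exact_mod_cast hv ▸ Nat.multinomial_le_factorial_sum univ v
  · exact_mod_cast Nat.one_le_iff_ne_zero.2 m.factorial_ne_zero

theorem hypergeometric_multinomial_bound (m d : ℕ) (hm : 1 ≤ m) (hd : 1 ≤ d) :
    ∃ M : ℝ, ∀ U : Fin d → ℕ, m ≤ ∑ i, U i →
      ∀ v ∈ sigmaVec d m,
        |(∏ i, (Nat.choose (U i) (v i) : ℝ)) / (Nat.choose (∑ i, U i) m : ℝ)
          - (Nat.multinomial Finset.univ v : ℝ) *
            ∏ i, ((U i : ℝ) / (∑ i, U i : ℕ)) ^ v i|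
        ≤ M / (∑ i, U i : ℕ) :=
  hypergeometric_multinomial_bound_general m d hm
end
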